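/- arXiv:2506.18461 — 2 statements merged into one kernel-verified Lean document; each statement's English description precedes it below -/
import Mathlib

section
/- For positive integers a and r, the sum ∑_{i=0}^{r} 1/(a+i)² is strictly greater than (r+1)/((a + r + 1 - ε_a)(a - ε_a)), where ε_a = (2a + 1 - √(4a² + 1))/2. -/
/-!
With `ε = ε_x` the root of `ε² - (2x + 1) ε + x = 0` below `1/2`, one has
`(x + i - ε)(x + i + 1 - ε) = (x + i)² + i (1 - 2ε) ≥ (x + i)²`, strictly for `i > 0`.
Hence `1/(x + i)²` dominates the telescoping term `1/(x + i - ε) - 1/(x + i + 1 - ε)`,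
and summing over `i ≤ r` gives `(r + 1)/((x + r + 1 - ε)(x - ε))`.
-/

open Finset

/-- The `ε_x` of the paper. -/
noncomputable def invSqShift (x : ℝ) : ℝ := (2 * x + 1 - √(4 * x ^ 2 + 1)) / 2

lemma invSqShift_lt_half (x : ℝ) : invSqShift x < 1 / 2 := by
  have h : |2 * x| < √(4 * x ^ 2 + 1) := Real.lt_sqrt_of_sq_lt (by nlinarith [sq_abs (2 * x)])
  unfold invSqShift
  linarith [le_abs_self (2 * x)]

lemma sub_invSqShift_pos {x : ℝ} (hx : 0 < x) : 0 < x - invSqShift x := by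
  have h : 1 < √(4 * x ^ 2 + 1) := Real.lt_sqrt_of_sq_lt (by nlinarith)
  unfold invSqShift
  linarith

lemma sub_invSqShift_add_mul (x t : ℝ) :
    (x - invSqShift x + t) * (x - invSqShift x + t + 1) =
      (x + t) ^ 2 + t * (1 - 2 * invSqShift x) := by
  have hs : √(4 * x ^ 2 + 1) ^ 2 = 4 * x ^ 2 + 1 := Real.sq_sqrt (by positivity)
  unfold invSqShift
  linear_combination (1 / 4 : ℝ) * hs

lemma sum_range_one_div_add_mul_add_succ {c : ℝ} (hc : 0 < c) (n : ℕ) :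
    ∑ i ∈ range n, 1 / ((c + i) * (c + i + 1)) = n / ((c + n) * c) := by
  induction n with
  | zero => simp
  | succ n ih =>
    rw [sum_range_succ, ih]
    push_cast
    field_simp
    ring

lemma one_div_shift_mul_le_one_div_sq (x : ℝ) {t : ℝ} (ht : 0 ≤ t) (hxt : 0 < x + t) :
    1 / ((x - invSqShift x + t) * (x - invSqShift x + t + 1)) ≤ 1 / (x + t) ^ 2 := by
  rw [sub_invSqShift_add_mul]
  have := invSqShift_lt_half x
  gcongr
  nlinarith

lemma one_div_shift_mul_lt_one_div_sq (x : ℝ) {t : ℝ} (ht : 0 < t) (hxt : 0 < x + t) :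
    1 / ((x - invSqShift x + t) * (x - invSqShift x + t + 1)) < 1 / (x + t) ^ 2 := by
  rw [sub_invSqShift_add_mul]
  have := invSqShift_lt_half x
  gcongr
  nlinarith

theorem div_lt_sum_range_one_div_add_sq {x : ℝ} (hx : 0 < x) {r : ℕ} (hr : 0 < r) :
    (r + 1 : ℝ) / ((x + r + 1 - invSqShift x) * (x - invSqShift x)) <
      ∑ i ∈ range (r + 1), 1 / (x + i) ^ 2 := by
  have hc := sub_invSqShift_pos hx
  calc (r + 1 : ℝ) / ((x + r + 1 - invSqShift x) * (x - invSqShift x))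
      = ∑ i ∈ range (r + 1), 1 / ((x - invSqShift x + i) * (x - invSqShift x + i + 1)) := by
        rw [sum_range_one_div_add_mul_add_succ hc]
        push_cast
        ring_nf
    _ < ∑ i ∈ range (r + 1), 1 / (x + i) ^ 2 :=
        sum_lt_sum (fun i _ => one_div_shift_mul_le_one_div_sq x i.cast_nonneg (by positivity))
          ⟨r, self_mem_range_succ r,
            one_div_shift_mul_lt_one_div_sq x (by exact_mod_cast hr) (by positivity)⟩

theorem stmt_2 (a r : ℕ) (ha : 0 < a) (hr : 0 < r) :
    (r + 1 : ℝ) /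
        (((a : ℝ) + r + 1 - (2 * a + 1 - Real.sqrt (4 * a ^ 2 + 1)) / 2) *
          ((a : ℝ) - (2 * a + 1 - Real.sqrt (4 * a ^ 2 + 1)) / 2))
      < ∑ i ∈ Finset.range (r + 1), 1 / ((a : ℝ) + i) ^ 2 :=
  div_lt_sum_range_one_div_add_sq (Nat.cast_pos.mpr ha) hr
end

section
/- For positive integers a and r, the sum ∑_{i=0}^{r} 1/(a+i)² is strictly less than (r+1)/((a + r + 1 - ε_{a+r})(a - ε_{a+r})), where ε_n = (2n + 1 - √(4n² + 1))/2. -/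
/-!
Write `ε = ε_N` with `N = a + r`. Since `ε` is a root of `ε² - (2N + 1)ε + N = 0`, one has
`(x - ε)(x + 1 - ε) = x² - (1 - 2ε)(N - x)`, so for `x ≤ N` the square `x²` dominates
`(x - ε)(x + 1 - ε)`, strictly when `x < N`. Comparing termwise with
`1/((x - ε)(x + 1 - ε)) = 1/(x - ε) - 1/(x + 1 - ε)` and telescoping gives the bound.
-/

open Finset Real

noncomputable def eps (n : ℝ) : ℝ := (2 * n + 1 - √(4 * n ^ 2 + 1)) / 2

lemma eps_lt_one_half (n : ℝ) : eps n < 1 / 2 := by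
  have h : 2 * n < √(4 * n ^ 2 + 1) := by
    apply lt_sqrt_of_sq_lt
    nlinarith
  unfold eps
  linarith

lemma eps_sq (n : ℝ) : eps n ^ 2 = (2 * n + 1) * eps n - n := by
  have h : √(4 * n ^ 2 + 1) ^ 2 = 4 * n ^ 2 + 1 := sq_sqrt (by positivity)
  unfold eps
  linear_combination h / 4

lemma sub_eps_mul_add_one (n x : ℝ) :
    (x - eps n) * (x - eps n + 1) = x ^ 2 - (1 - 2 * eps n) * (n - x) := by
  linear_combination eps_sq n

lemma sub_eps_mul_add_one_le_sq {n x : ℝ} (hx : x ≤ n) :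
    (x - eps n) * (x - eps n + 1) ≤ x ^ 2 := by
  rw [sub_eps_mul_add_one]
  have := eps_lt_one_half n
  nlinarith

lemma sub_eps_mul_add_one_lt_sq {n x : ℝ} (hx : x < n) :
    (x - eps n) * (x - eps n + 1) < x ^ 2 := by
  rw [sub_eps_mul_add_one]
  have := eps_lt_one_half n
  nlinarith

lemma one_div_sq_le_one_div_sub_eps_mul {n x : ℝ} (hεx : eps n < x) (hx : x ≤ n) :
    1 / x ^ 2 ≤ 1 / ((x - eps n) * (x - eps n + 1)) :=
  one_div_le_one_div_of_le (by nlinarith) (sub_eps_mul_add_one_le_sq hx)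

lemma one_div_sq_lt_one_div_sub_eps_mul {n x : ℝ} (hεx : eps n < x) (hx : x < n) :
    1 / x ^ 2 < 1 / ((x - eps n) * (x - eps n + 1)) :=
  one_div_lt_one_div_of_lt (by nlinarith) (sub_eps_mul_add_one_lt_sq hx)

lemma sum_range_one_div_mul_add_one {b : ℝ} (hb : 0 < b) (m : ℕ) :
    ∑ i ∈ range m, 1 / ((b + i) * (b + i + 1)) = m / (b * (b + m)) := by
  have hsplit : ∀ i : ℕ, 1 / ((b + i) * (b + i + 1)) = 1 / (b + i) - 1 / (b + (i + 1 : ℕ)) := by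
    intro i
    have : 0 < b + i := by positivity
    push_cast
    field_simp
    ring
  rw [sum_congr rfl fun i _ => hsplit i, sum_range_sub' (fun i : ℕ => 1 / (b + i))]
  have : 0 < b + m := by positivity
  field_simp
  ring

theorem stmt_3 (a r : ℕ) (ha : 0 < a) (hr : 0 < r) :
    ∑ i ∈ Finset.range (r + 1), 1 / ((a : ℝ) + i) ^ 2
      < (r + 1 : ℝ) /
          (((a : ℝ) + r + 1 - (2 * (a + r : ℕ) + 1 - Real.sqrt (4 * (a + r : ℕ) ^ 2 + 1)) / 2) *
            ((a : ℝ) - (2 * (a + r : ℕ) + 1 - Real.sqrt (4 * (a + r : ℕ) ^ 2 + 1)) / 2)) := by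
  change _ < _ / ((_ - eps ((a + r : ℕ) : ℝ)) * (_ - eps ((a + r : ℕ) : ℝ)))
  set ε := eps ((a + r : ℕ) : ℝ)
  have hN : ((a + r : ℕ) : ℝ) = a + r := Nat.cast_add a r
  have ha1 : (1 : ℝ) ≤ a := by exact_mod_cast ha
  have hr1 : (1 : ℝ) ≤ r := by exact_mod_cast hr
  have hε : ε < 1 / 2 := eps_lt_one_half _
  have hb : 0 < (a : ℝ) - ε := by linarith
  calc ∑ i ∈ range (r + 1), 1 / ((a : ℝ) + i) ^ 2
      < ∑ i ∈ range (r + 1), 1 / (((a : ℝ) - ε + i) * ((a : ℝ) - ε + i + 1)) := by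
        refine sum_lt_sum (fun i hi => ?_) ⟨0, by simp, ?_⟩
        · have hi : (i : ℝ) ≤ r := by exact_mod_cast Nat.lt_succ_iff.mp (mem_range.mp hi)
          rw [sub_add_eq_add_sub (a : ℝ)]
          exact one_div_sq_le_one_div_sub_eps_mul (by linarith [i.cast_nonneg (α := ℝ)])
            (by rw [hN]; linarith)
        · rw [sub_add_eq_add_sub (a : ℝ)]
          exact one_div_sq_lt_one_div_sub_eps_mul (by rw [Nat.cast_zero, add_zero]; linarith)
            (by rw [hN]; push_cast; linarith)
    _ = ((r + 1 : ℕ) : ℝ) / (((a : ℝ) - ε) * ((a : ℝ) - ε + (r + 1 : ℕ))) :=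
        sum_range_one_div_mul_add_one hb (r + 1)
    _ = _ := by push_cast; ring
end
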